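/- arXiv:0902.1042 — 3 statements merged into one kernel-verified Lean document; each statement's English description precedes it below -/
import Mathlib

section
/- Every ω-regular language over a finite alphabet Σ, i.e., every language recognized by a deterministic Muller automaton, is recognized by a deterministic max-automaton. -/
namespace MaxReg

/-! ### Counter operations and boolean combinations -/

inductive CounterOp (C : Type) where
  | inc (c : C)
  | reset (c : C)
  | output (c : C)
  | maxOp (c d : C)

def applyOp {C : Type} [DecidableEq C] (v : C → ℕ) :
    CounterOp C → (C → ℕ) × Option (C × ℕ)
  | .inc c => (Function.update v c (v c + 1), none)
  | .reset c => (Function.update v c 0, none)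
  | .output c => (v, some (c, v c))
  | .maxOp c d => (Function.update v c (max (v c) (v d)), none)

def applyOps {C : Type} [DecidableEq C] :
    List (CounterOp C) → (C → ℕ) → (C → ℕ) × List (C × ℕ)
  | [], v => (v, [])
  | op :: ops, v =>
      let p := applyOp v op
      let r := applyOps ops p.1
      (r.1, p.2.toList ++ r.2)

/-- Boolean combinations with atoms in `σ` (used for acceptance conditions:
the atom `c` stands for "the sequence of values output on counter `c` is bounded"). -/
inductive BC (σ : Type) where
  | tt
  | atom (a : σ)
  | nt (φ : BC σ)
  | an (φ ψ : BC σ)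

def BC.eval {σ : Type} (f : σ → Prop) : BC σ → Prop
  | .tt => True
  | .atom a => f a
  | .nt φ => ¬ φ.eval f
  | .an φ ψ => φ.eval f ∧ ψ.eval f

/-! ### Deterministic max-automata -/

structure MaxAutomaton (α : Type) where
  Q : Type
  C : Type
  [finQ : Fintype Q]
  [finC : Fintype C]
  [decC : DecidableEq C]
  init : Q
  δ : Q → α → Q × List (CounterOp C)
  acc : BC C

attribute [instance] MaxAutomaton.finQ MaxAutomaton.finC MaxAutomaton.decC

namespace MaxAutomaton

variable {α : Type} (A : MaxAutomaton α)

/-- The state at position `n` of the unique run on `w`, started in state `q`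
(at position `0`). -/
def runFrom (q : A.Q) (w : ℕ → α) : ℕ → A.Q
  | 0 => q
  | n + 1 => (A.δ (runFrom q w n) (w n)).1

/-- Counter values before reading the letter at position `n` (all counters start at `0`). -/
def valsFrom (q : A.Q) (w : ℕ → α) : ℕ → (A.C → ℕ)
  | 0 => fun _ => 0
  | n + 1 => (applyOps (A.δ (A.runFrom q w n) (w n)).2 (valsFrom q w n)).1

/-- The (counter, value) pairs output while reading the letter at position `n`. -/
def outsFrom (q : A.Q) (w : ℕ → α) (n : ℕ) : List (A.C × ℕ) :=
  (applyOps (A.δ (A.runFrom q w n) (w n)).2 (A.valsFrom q w n)).2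

/-- "The sequence `ρ_c` of values output on counter `c` is bounded." -/
def BoundedFrom (q : A.Q) (w : ℕ → α) (c : A.C) : Prop :=
  ∃ B, ∀ n, ∀ p ∈ A.outsFrom q w n, p.1 = c → p.2 ≤ B

def AcceptsFrom (q : A.Q) (w : ℕ → α) : Prop :=
  A.acc.eval (A.BoundedFrom q w)

def Accepts (w : ℕ → α) : Prop := A.AcceptsFrom A.init w

def Lang : Set (ℕ → α) := { w | A.Accepts w }

/-- One step on a configuration (state, counter valuation), for reading finite words. -/
def stepList (p : A.Q × (A.C → ℕ)) (a : α) : A.Q × (A.C → ℕ) :=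
  ((A.δ p.1 a).1, (applyOps (A.δ p.1 a).2 p.2).1)

/-- Configuration (state, counter valuation) reached after reading a finite word
from the initial state with all counters `0`. -/
def readConfig (l : List α) : A.Q × (A.C → ℕ) :=
  l.foldl A.stepList (A.init, fun _ => 0)

end MaxAutomaton

/-! ### Annotating words with sets -/

/-- `w[X]` : extend each letter of `w` with the bit `1` exactly at the positions in `X`. -/
def withSet {α : Type} (w : ℕ → α) (X : Finset ℕ) : ℕ → α × Bool :=
  fun n => (w n, decide (n ∈ X))

/-- `w[X₁,…,Xₙ]` : extend each letter of `w` with a bit vector. -/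
def withSets {α : Type} {n : ℕ} (w : ℕ → α) (Xs : Fin n → Finset ℕ) :
    ℕ → α × (Fin n → Bool) :=
  fun m => (w m, fun i => decide (m ∈ Xs i))

/-- Annotate a finite word with a set of positions. -/
def encodeList {α : Type} (l : List α) (X : Finset ℕ) : List (α × Bool) :=
  l.zipIdx.map (fun p => (p.1, decide (p.2 ∈ X)))

/-- `UL` : the words `w` such that `w[X] ∈ L` for arbitrarily large finite sets `X`. -/
def UL {α : Type} (L : Set (ℕ → α × Bool)) : Set (ℕ → α) :=
  { w | ∀ n : ℕ, ∃ X : Finset ℕ, n ≤ X.card ∧ withSet w X ∈ L }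

/-- `max(q, l)` : maximal cardinality of a set `X` of positions of `l` such that `A`
reaches state `q` after reading `l[X]` (and `0` if there is no such set). -/
noncomputable def maxReach {α : Type} (A : MaxAutomaton (α × Bool)) (q : A.Q)
    (l : List α) : ℕ :=
  sSup { k | ∃ X : Finset ℕ, (∀ x ∈ X, x < l.length) ∧ X.card = k ∧
    (A.readConfig (encodeList l X)).1 = q }

def suffixFrom {α : Type} (w : ℕ → α) (n : ℕ) : ℕ → α := fun k => w (n + k)

def prefixList {α : Type} (w : ℕ → α) (n : ℕ) : List α := (List.range n).map w

/-! ### WMSO+U and MSO+U formulas -/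

inductive Formula (α : Type) where
  | letter (a : α) (x : ℕ)
  | mem (x X : ℕ)
  | le (x y : ℕ)
  | not (φ : Formula α)
  | and (φ ψ : Formula α)
  | exFO (x : ℕ) (φ : Formula α)
  | exSO (X : ℕ) (φ : Formula α)
  | U (X : ℕ) (φ : Formula α)

/-- Weak semantics: set variables range over finite sets of positions. -/
def Sat {α : Type} (w : ℕ → α) (v1 : ℕ → ℕ) (v2 : ℕ → Finset ℕ) :
    Formula α → Prop
  | .letter a x => w (v1 x) = a
  | .mem x X => v1 x ∈ v2 X
  | .le x y => v1 x ≤ v1 y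
  | .not φ => ¬ Sat w v1 v2 φ
  | .and φ ψ => Sat w v1 v2 φ ∧ Sat w v1 v2 ψ
  | .exFO x φ => ∃ k : ℕ, Sat w (Function.update v1 x k) v2 φ
  | .exSO X φ => ∃ S : Finset ℕ, Sat w v1 (Function.update v2 X S) φ
  | .U X φ => ∀ n : ℕ, ∃ S : Finset ℕ, n ≤ S.card ∧
      Sat w v1 (Function.update v2 X S) φ

/-- Full semantics: set variables range over arbitrary subsets of ℕ; the
unbounding quantifier still speaks about finite sets. -/
def SatFull {α : Type} (w : ℕ → α) (v1 : ℕ → ℕ) (v2 : ℕ → Set ℕ) :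
    Formula α → Prop
  | .letter a x => w (v1 x) = a
  | .mem x X => v1 x ∈ v2 X
  | .le x y => v1 x ≤ v1 y
  | .not φ => ¬ SatFull w v1 v2 φ
  | .and φ ψ => SatFull w v1 v2 φ ∧ SatFull w v1 v2 ψ
  | .exFO x φ => ∃ k : ℕ, SatFull w (Function.update v1 x k) v2 φ
  | .exSO X φ => ∃ S : Set ℕ, SatFull w v1 (Function.update v2 X S) φ
  | .U X φ => ∀ n : ℕ, ∃ S : Finset ℕ, n ≤ S.card ∧
      SatFull w v1 (Function.update v2 X (↑S : Set ℕ)) φ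

def freeFO {α : Type} : Formula α → Finset ℕ
  | .letter _ x => {x}
  | .mem x _ => {x}
  | .le x y => {x, y}
  | .not φ => freeFO φ
  | .and φ ψ => freeFO φ ∪ freeFO ψ
  | .exFO x φ => freeFO φ \ {x}
  | .exSO _ φ => freeFO φ
  | .U _ φ => freeFO φ

def freeSO {α : Type} : Formula α → Finset ℕ
  | .letter _ _ => ∅
  | .mem _ X => {X}
  | .le _ _ => ∅
  | .not φ => freeSO φ
  | .and φ ψ => freeSO φ ∪ freeSO ψ
  | .exFO _ φ => freeSO φ
  | .exSO X φ => freeSO φ \ {X}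
  | .U X φ => freeSO φ \ {X}

def Sentence {α : Type} (φ : Formula α) : Prop :=
  freeFO φ = ∅ ∧ freeSO φ = ∅

/-- `L` is definable by a sentence of WMSO+U. -/
def DefinableW {α : Type} (L : Set (ℕ → α)) : Prop :=
  ∃ φ : Formula α, Sentence φ ∧
    L = { w | Sat w (fun _ => 0) (fun _ => (∅ : Finset ℕ)) φ }

/-- `L` is definable by a sentence of full MSO+U. -/
def DefinableF {α : Type} (L : Set (ℕ → α)) : Prop :=
  ∃ φ : Formula α, Sentence φ ∧
    L = { w | SatFull w (fun _ => 0) (fun _ => (∅ : Set ℕ)) φ }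

/-- `φ` contains no occurrence of the unbounding quantifier. -/
def UFree {α : Type} : Formula α → Prop
  | .letter _ _ => True
  | .mem _ _ => True
  | .le _ _ => True
  | .not φ => UFree φ
  | .and φ ψ => UFree φ ∧ UFree ψ
  | .exFO _ φ => UFree φ
  | .exSO _ φ => UFree φ
  | .U _ _ => False

/-- Boolean combinations of formulas `U X. φ` with `φ` free of the unbounding
quantifier. -/
inductive IsUNormal {α : Type} : Formula α → Prop
  | base (X : ℕ) (φ : Formula α) : UFree φ → IsUNormal (.U X φ)
  | not {φ : Formula α} : IsUNormal φ → IsUNormal (.not φ)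
  | and {φ ψ : Formula α} : IsUNormal φ → IsUNormal ψ →
      IsUNormal (.and φ ψ)

/-! ### Deterministic Muller automata -/

structure MullerAutomaton (α : Type) where
  Q : Type
  [finQ : Fintype Q]
  init : Q
  δ : Q → α → Q
  F : Set (Set Q)

attribute [instance] MullerAutomaton.finQ

namespace MullerAutomaton

variable {α : Type} (M : MullerAutomaton α)

def run (w : ℕ → α) : ℕ → M.Q
  | 0 => M.init
  | n + 1 => M.δ (run w n) (w n)

/-- States occurring infinitely often in the run on `w`. -/
def InfOcc (w : ℕ → α) : Set M.Q :=
  { q | ∀ n : ℕ, ∃ m, n ≤ m ∧ M.run w m = q }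

def Lang : Set (ℕ → α) := { w | M.InfOcc w ∈ M.F }

end MullerAutomaton

/-! ### Partial runs, convergence, spanning sets -/

section PartialRuns

variable {Q α : Type}

/-- State at position `n + k` of the run seeded at configuration `(q, n)`. -/
def runSeed (δ : Q → α → Q) (w : ℕ → α) (q : Q) (n : ℕ) : ℕ → Q
  | 0 => q
  | k + 1 => δ (runSeed δ w q n k) (w (n + k))

/-- The partial run seeded at configuration `(q, n)`. -/
def seeded (δ : Q → α → Q) (w : ℕ → α) (q : Q) (n : ℕ) : ℕ → Option Q :=
  fun m => if _h : n ≤ m then some (runSeed δ w q n (m - n)) else none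

/-- A partial run over `w`: either the nowhere-defined run or a seeded run. -/
def IsPartialRun (δ : Q → α → Q) (w : ℕ → α) (ρ : ℕ → Option Q) : Prop :=
  ρ = (fun _ => none) ∨ ∃ q n, ρ = seeded δ w q n

/-- Two partial runs converge if they agree from some position on. -/
def Converge (ρ₁ ρ₂ : ℕ → Option Q) : Prop :=
  ∃ N : ℕ, ∀ m, N ≤ m → ρ₁ m = ρ₂ m

/-- A set of partial runs spans `w` if every partial run over `w` converges with
some member of the set. -/
def Spans (δ : Q → α → Q) (w : ℕ → α) (S : Set (ℕ → Option Q)) : Prop :=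
  ∀ ρ, IsPartialRun δ w ρ → ∃ ρ' ∈ S, Converge ρ ρ'

end PartialRuns

/-! ### Deterministic letter-to-letter transducers -/

structure Transducer (α β : Type) where
  Q : Type
  [finQ : Fintype Q]
  init : Q
  δ : Q → α → Q
  out : Q → α → β

attribute [instance] Transducer.finQ

namespace Transducer

variable {α β : Type} (T : Transducer α β)

def run (w : ℕ → α) : ℕ → T.Q
  | 0 => T.init
  | n + 1 => T.δ (run w n) (w n)

/-- The function `Σ^ω → Γ^ω` computed by the transducer. -/
def f (w : ℕ → α) : ℕ → β := fun n => T.out (T.run w n) (w n)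

end Transducer

open Classical in
/-- Decode a word over `Q × {0,1}` as a partial run: position `m` is defined (with the
state recorded at `m`) iff all markers from position `m` on are `1`. -/
noncomputable def decode {Q : Type} (u : ℕ → Q × Bool) : ℕ → Option Q :=
  fun m => if (∀ j, m ≤ j → (u j).2 = true) then some (u m).1 else none

/-! ### Guarded max-automata -/

inductive GOp (C α : Type) where
  | inc (c : C)
  | reset (c : C)
  | output (c : C)
  | maxOp (c d : C)
  /-- `if G then output c` : output the value of `c` only if the suffix of the input
  beginning at the next position belongs to `G`. -/
  | goutput (G : Set (ℕ → α)) (c : C)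

open Classical in
noncomputable def applyGOp {C α : Type} [DecidableEq C] (suffix : ℕ → α)
    (v : C → ℕ) : GOp C α → (C → ℕ) × Option (C × ℕ)
  | .inc c => (Function.update v c (v c + 1), none)
  | .reset c => (Function.update v c 0, none)
  | .output c => (v, some (c, v c))
  | .maxOp c d => (Function.update v c (max (v c) (v d)), none)
  | .goutput G c => (v, if suffix ∈ G then some (c, v c) else none)

noncomputable def applyGOps {C α : Type} [DecidableEq C] (suffix : ℕ → α) :
    List (GOp C α) → (C → ℕ) → (C → ℕ) × List (C × ℕ)
  | [], v => (v, [])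
  | op :: ops, v =>
      let p := applyGOp suffix v op
      let r := applyGOps suffix ops p.1
      (r.1, p.2.toList ++ r.2)

def GOp.WF {C α : Type} : GOp C α → Prop
  | .goutput G _ => ∃ A : MaxAutomaton α, A.Lang = G
  | _ => True

structure GuardedMaxAutomaton (α : Type) where
  Q : Type
  C : Type
  [finQ : Fintype Q]
  [finC : Fintype C]
  [decC : DecidableEq C]
  init : Q
  δ : Q → α → Q × List (GOp C α)
  acc : BC C

attribute [instance] GuardedMaxAutomaton.finQ GuardedMaxAutomaton.finC
  GuardedMaxAutomaton.decC

namespace GuardedMaxAutomaton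

variable {α : Type} (B : GuardedMaxAutomaton α)

/-- All guards used by the automaton are languages recognized by deterministic
max-automata. -/
def WF : Prop := ∀ q a, ∀ op ∈ (B.δ q a).2, op.WF

def run (w : ℕ → α) : ℕ → B.Q
  | 0 => B.init
  | n + 1 => (B.δ (run w n) (w n)).1

noncomputable def vals (w : ℕ → α) : ℕ → (B.C → ℕ)
  | 0 => fun _ => 0
  | n + 1 =>
      (applyGOps (suffixFrom w (n + 1)) (B.δ (B.run w n) (w n)).2 (vals w n)).1

noncomputable def outs (w : ℕ → α) (n : ℕ) : List (B.C × ℕ) :=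
  (applyGOps (suffixFrom w (n + 1)) (B.δ (B.run w n) (w n)).2 (B.vals w n)).2

def Bounded (w : ℕ → α) (c : B.C) : Prop :=
  ∃ Bd, ∀ n, ∀ p ∈ B.outs w n, p.1 = c → p.2 ≤ Bd

def Accepts (w : ℕ → α) : Prop := B.acc.eval (B.Bounded w)

def Lang : Set (ℕ → α) := { w | B.Accepts w }

end GuardedMaxAutomaton

/-! ### Nondeterministic max-automata -/

structure NMaxAutomaton (α : Type) where
  Q : Type
  C : Type
  [finQ : Fintype Q]
  [finC : Fintype C]
  [decC : DecidableEq C]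
  init : Q
  δ : Q → α → Set (Q × List (CounterOp C))
  acc : BC C

attribute [instance] NMaxAutomaton.finQ NMaxAutomaton.finC NMaxAutomaton.decC

/-- Counter values along a sequence of counter-operation lists. -/
def nvals {C : Type} [DecidableEq C] (ops : ℕ → List (CounterOp C)) :
    ℕ → (C → ℕ)
  | 0 => fun _ => 0
  | n + 1 => (applyOps (ops n) (nvals ops n)).1

def nouts {C : Type} [DecidableEq C] (ops : ℕ → List (CounterOp C)) (n : ℕ) :
    List (C × ℕ) :=
  (applyOps (ops n) (nvals ops n)).2

namespace NMaxAutomaton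

variable {α : Type} (A : NMaxAutomaton α)

def Accepts (w : ℕ → α) : Prop :=
  ∃ (q : ℕ → A.Q) (ops : ℕ → List (CounterOp A.C)),
    q 0 = A.init ∧
    (∀ n, (q (n + 1), ops n) ∈ A.δ (q n) (w n)) ∧
    A.acc.eval (fun c => ∃ B, ∀ n, ∀ p ∈ nouts ops n, p.1 = c → p.2 ≤ B)

def Lang : Set (ℕ → α) := { w | A.Accepts w }

end NMaxAutomaton

/-! ### The separating language -/

/-- Position of the `k`-th letter `b` in `a^{ns 0} b a^{ns 1} b ⋯` (0-indexed). -/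
def bpos (ns : ℕ → ℕ) (k : ℕ) : ℕ := (∑ i ∈ Finset.range (k + 1), ns i) + k

/-- `L_sep` over the alphabet `{a, b}` (with `a = false`, `b = true`): words
`a^{n₁} b a^{n₂} b ⋯` such that some number appears infinitely often in `n₁, n₂, …`. -/
def Lsep : Set (ℕ → Bool) :=
  { w | ∃ ns : ℕ → ℕ,
      (∀ m, w m = true ↔ ∃ k, bpos ns k = m) ∧
      ∃ v, { i | ns i = v }.Infinite }

/-! ### Topological notions -/

/-- A `Σ₂` set: a countable union of closed sets. -/
def IsSigma2 {X : Type} [TopologicalSpace X] (S : Set X) : Prop :=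
  ∃ F : ℕ → Set X, (∀ n, IsClosed (F n)) ∧ S = ⋃ n, F n

/-- Boolean combinations of `Σ₂` sets. -/
inductive IsBoolCombSigma2 {X : Type} [TopologicalSpace X] : Set X → Prop
  | base {S : Set X} : IsSigma2 S → IsBoolCombSigma2 S
  | compl {S : Set X} : IsBoolCombSigma2 S → IsBoolCombSigma2 Sᶜ
  | inter {S T : Set X} : IsBoolCombSigma2 S → IsBoolCombSigma2 T →
      IsBoolCombSigma2 (S ∩ T)

/-!
Give the max-automaton the states of the Muller automaton and one counter per state; on
leaving state `q` it increments counter `q` and outputs it. The values output on counter `q`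
are then `1, 2, 3, …`, one per visit to `q`, so they are bounded exactly when `q` is visited
finitely often. Over finitely many counters, any condition on the set of unbounded counters
(here: membership in the Muller table) is a boolean combination of boundedness atoms.
-/

namespace BC

variable {σ : Type}

def ff : BC σ := .nt .tt

def or (φ ψ : BC σ) : BC σ := .nt (.an (.nt φ) (.nt ψ))

def all (l : List (BC σ)) : BC σ := l.foldr .an .tt

def any (l : List (BC σ)) : BC σ := l.foldr or ff

variable (f : σ → Prop)

@[simp]
lemma eval_all (l : List (BC σ)) : (all l).eval f ↔ ∀ φ ∈ l, φ.eval f := by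
  induction l with
  | nil => simp [all, eval]
  | cons φ l ih => simp [all, eval, ← ih]

@[simp]
lemma eval_any (l : List (BC σ)) : (any l).eval f ↔ ∃ φ ∈ l, φ.eval f := by
  induction l with
  | nil => simp [any, ff, eval]
  | cons φ l ih => simp only [any, List.foldr_cons, or, eval] at ih ⊢; simp [← ih]; tauto

noncomputable def exactly [Fintype σ] [DecidableEq σ] (S : Finset σ) : BC σ :=
  all (Finset.univ.toList.map fun a => if a ∈ S then atom a else nt (atom a))

lemma eval_exactly [Fintype σ] [DecidableEq σ] (S : Finset σ) :
    (exactly S).eval f ↔ ∀ a, f a ↔ a ∈ S := by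
  refine (eval_all f _).trans ⟨fun h a => ?_, fun h φ hφ => ?_⟩
  · have := h _ (List.mem_map_of_mem (Finset.mem_toList.2 (Finset.mem_univ a)))
    split_ifs at this with ha <;> simp_all [eval]
  · obtain ⟨a, -, rfl⟩ := List.mem_map.1 hφ
    split_ifs with ha <;> simp_all [eval]

theorem exists_eval_iff_mem [Finite σ] (F : Set (Set σ)) :
    ∃ φ : BC σ, ∀ f : σ → Prop, φ.eval f ↔ {a | f a} ∈ F := by
  classical
  have := Fintype.ofFinite σ
  refine ⟨any ((Finset.univ.filter fun S : Finset σ => ↑S ∈ F).toList.map exactly),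
    fun f => ?_⟩
  simp only [eval_any, List.mem_map, Finset.mem_toList, Finset.mem_filter,
    Finset.mem_univ, true_and]
  constructor
  · rintro ⟨_, ⟨S, hS, rfl⟩, hf⟩
    convert hS
    ext a
    exact (eval_exactly f S).1 hf a
  · intro hF
    refine ⟨_, ⟨(Set.toFinite {a | f a}).toFinset, by simpa using hF, rfl⟩, ?_⟩
    exact (eval_exactly f _).2 fun a => by simp

end BC

lemma applyOps_inc_output {C : Type} [DecidableEq C] (v : C → ℕ) (c : C) :
    applyOps [.inc c, .output c] v = (Function.update v c (v c + 1), [(c, v c + 1)]) := by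
  simp [applyOps, applyOp]

namespace MullerAutomaton

variable {α : Type} (M : MullerAutomaton α)

lemma mem_infOcc_iff_infinite (w : ℕ → α) (q : M.Q) :
    q ∈ M.InfOcc w ↔ {n | M.run w n = q}.Infinite :=
  Filter.frequently_atTop.symm.trans Nat.frequently_atTop_iff_infinite

variable [DecidableEq M.Q]

abbrev visitCounter (acc : BC M.Q) : MaxAutomaton α where
  Q := M.Q
  C := M.Q
  init := M.init
  δ q a := (M.δ q a, [.inc q, .output q])
  acc := acc

variable (acc : BC M.Q) (w : ℕ → α)

lemma runFrom_visitCounter (n : ℕ) :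
    (M.visitCounter acc).runFrom M.init w n = M.run w n := by
  induction n with
  | zero => rfl
  | succ n ih => simp only [MaxAutomaton.runFrom, ih]; rfl

lemma valsFrom_visitCounter (n : ℕ) (q : M.Q) :
    (M.visitCounter acc).valsFrom M.init w n q = Nat.count (M.run w · = q) n := by
  induction n with
  | zero => rfl
  | succ n ih =>
    simp only [MaxAutomaton.valsFrom, runFrom_visitCounter, applyOps_inc_output,
      Nat.count_succ, ← ih]
    by_cases h : M.run w n = q
    · subst h; simp
    · simp [h, Function.update_of_ne (Ne.symm h)]

lemma outsFrom_visitCounter (n : ℕ) :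
    (M.visitCounter acc).outsFrom M.init w n =
      [(M.run w n, Nat.count (M.run w · = M.run w n) n + 1)] := by
  simp only [MaxAutomaton.outsFrom, runFrom_visitCounter, applyOps_inc_output,
    valsFrom_visitCounter]

lemma boundedFrom_visitCounter_iff (q : M.Q) :
    (M.visitCounter acc).BoundedFrom M.init w q ↔ q ∉ M.InfOcc w := by
  simp only [mem_infOcc_iff_infinite, Set.not_infinite, MaxAutomaton.BoundedFrom,
    outsFrom_visitCounter, List.mem_singleton, forall_eq]
  constructor
  · rintro ⟨B, hB⟩
    refine .of_finite_image (f := Nat.count (M.run w · = q)) ((Set.finite_Iic B).subset ?_)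
      fun m hm n hn => Nat.count_injective hm hn
    rintro _ ⟨n, rfl, rfl⟩
    exact Nat.le_of_succ_le (hB n rfl)
  · intro hfin
    refine ⟨hfin.toFinset.card, fun n hn => ?_⟩
    subst hn
    exact Nat.count_lt_card hfin rfl

lemma accepts_visitCounter_iff :
    (M.visitCounter acc).Accepts w ↔ acc.eval (· ∉ M.InfOcc w) := by
  have hbounded : (M.visitCounter acc).BoundedFrom M.init w = (· ∉ M.InfOcc w) :=
    funext fun q => propext (M.boundedFrom_visitCounter_iff acc w q)
  exact Iff.of_eq (congrArg acc.eval hbounded)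

end MullerAutomaton

theorem muller_le_maxAutomaton_general {α : Type}
    (M : MullerAutomaton α) :
    ∃ A : MaxAutomaton α, A.Lang = M.Lang := by
  classical
  obtain ⟨acc, hacc⟩ := BC.exists_eval_iff_mem {S : Set M.Q | Sᶜ ∈ M.F}
  refine ⟨M.visitCounter acc, Set.ext fun w => ?_⟩
  rw [MaxAutomaton.Lang, Set.mem_ofPred_eq, M.accepts_visitCounter_iff, hacc]
  simp [MullerAutomaton.Lang, Set.compl_ofPred]

/-- Deterministic max-automata capture all ω-regular languages:
every language recognized by a deterministic Muller automaton is recognized by a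
deterministic max-automaton. -/
theorem muller_le_maxAutomaton {α : Type} [Fintype α]
    (M : MullerAutomaton α) :
    ∃ A : MaxAutomaton α, A.Lang = M.Lang :=
  muller_le_maxAutomaton_general M

end MaxReg
end

section
/- Let A be a deterministic max-automaton over Σ×{0,1} with state set Q. There exists a deterministic max-automaton over Σ with counters {c_q}_{q∈Q} such that after reading any finite prefix a₁⋯aₙ of its input, the value of counter c_q equals max(q, a₁⋯aₙ). -/
namespace MaxReg

/-!
Read `l[X]` only through the pair (state reached, `|X|`). The set of these pairs for `l a` is
obtained from the one for `l` by a weighted subset construction: a transition `p -(a, b)-> q` turns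
`(p, k)` into `(q, k + b)`. Hence `max(q, l a)` is the maximum of `max(p, l) + b` over the
transitions `p -(a, b)-> q` from the states `p` reachable on `l`, and a max-automaton can track
it: its state is the set of reachable states, and the counter `main q` holds `max(q, ·)`. The
update is a simultaneous assignment; it is realised sequentially through scratch counters holding
`max(p, l) + 1` and the new values.
-/

section CounterPrograms

variable {C : Type} [DecidableEq C]

def runOps (ops : List (CounterOp C)) (v : C → ℕ) : C → ℕ := (applyOps ops v).1

@[simp] lemma runOps_nil (v : C → ℕ) : runOps [] v = v := rfl

@[simp] lemma runOps_cons (op : CounterOp C) (ops : List (CounterOp C)) (v : C → ℕ) :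
    runOps (op :: ops) v = runOps ops (applyOp v op).1 := rfl

lemma runOps_append (ops₁ ops₂ : List (CounterOp C)) (v : C → ℕ) :
    runOps (ops₁ ++ ops₂) v = runOps ops₂ (runOps ops₁ v) := by
  induction ops₁ generalizing v with
  | nil => rfl
  | cons op ops ih => exact ih _

lemma runOps_map_maxOp {d : C} {l : List C} (hd : d ∉ l) (v : C → ℕ) :
    runOps (l.map (.maxOp d)) v = Function.update v d (v d ⊔ l.toFinset.sup v) := by
  induction l generalizing v with
  | nil => simp
  | cons c l ih =>
    obtain ⟨hdc, hdl⟩ : d ≠ c ∧ d ∉ l := by simpa using hd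
    have hsup : l.toFinset.sup (Function.update v d (v d ⊔ v c)) = l.toFinset.sup v :=
      Finset.sup_congr rfl fun x hx =>
        Function.update_of_ne (ne_of_mem_of_not_mem hx (by simpa using hdl)) ..
    simp [applyOp, ih hdl, hsup, max_assoc]

noncomputable def assignSup (d : C) (S : Finset C) : List (CounterOp C) :=
  .reset d :: S.toList.map (.maxOp d)

lemma runOps_assignSup {d : C} {S : Finset C} (hd : d ∉ S) (v : C → ℕ) :
    runOps (assignSup d S) v = Function.update v d (S.sup v) := by
  have hsup : S.sup (Function.update v d 0) = S.sup v :=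
    Finset.sup_congr rfl fun x hx => Function.update_of_ne (ne_of_mem_of_not_mem hx hd) ..
  rw [assignSup, runOps_cons, runOps_map_maxOp (by simpa using hd)]
  simp [applyOp, Finset.toList_toFinset, hsup]

/-- Programs assigning pairwise distinct counters `t k`, each reading only counters outside the
range of `t`, do not interfere: run one after the other they act as a simultaneous assignment. -/
lemma runOps_flatMap_of_assign {κ : Type} {t : κ → C} (ht : t.Injective)
    {F : κ → (C → ℕ) → ℕ} (hF : ∀ k v v', (∀ c ∉ Set.range t, v c = v' c) → F k v = F k v')
    {prog : κ → List (CounterOp C)}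
    (hprog : ∀ k v, runOps (prog k) v = Function.update v (t k) (F k v))
    {ks : List κ} (hks : ks.Nodup) (v : C → ℕ) :
    (∀ k ∈ ks, runOps (ks.flatMap prog) v (t k) = F k v) ∧
      ∀ c, (∀ k ∈ ks, t k ≠ c) → runOps (ks.flatMap prog) v c = v c := by
  induction ks generalizing v with
  | nil => simp
  | cons k ks ih =>
    obtain ⟨hk, hks⟩ := List.nodup_cons.1 hks
    set v₁ := Function.update v (t k) (F k v)
    have hv₁ : ∀ c ∉ Set.range t, v₁ c = v c := fun c hc =>
      Function.update_of_ne (fun h => hc ⟨k, h.symm⟩) ..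
    obtain ⟨ih_mem, ih_other⟩ := ih hks v₁
    rw [List.flatMap_cons, runOps_append, hprog]
    refine ⟨fun k' hk' => ?_, fun c hc => ?_⟩
    · rcases List.mem_cons.1 hk' with rfl | hk'
      · rw [ih_other _ fun j hj h => hk (by rwa [ht h] at hj)]
        exact Function.update_self ..
      · rw [ih_mem k' hk']
        exact hF k' v₁ v hv₁
    · rw [ih_other c fun j hj => hc j (List.mem_cons_of_mem _ hj)]
      exact Function.update_of_ne (hc k List.mem_cons_self).symm ..

lemma runOps_univ_flatMap_of_assign {κ : Type} [Fintype κ] {t : κ → C} (ht : t.Injective)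
    {F : κ → (C → ℕ) → ℕ} (hF : ∀ k v v', (∀ c ∉ Set.range t, v c = v' c) → F k v = F k v')
    {prog : κ → List (CounterOp C)}
    (hprog : ∀ k v, runOps (prog k) v = Function.update v (t k) (F k v)) (v : C → ℕ) :
    (∀ k, runOps (Finset.univ.toList.flatMap prog) v (t k) = F k v) ∧
      ∀ c ∉ Set.range t, runOps (Finset.univ.toList.flatMap prog) v c = v c :=
  have h := runOps_flatMap_of_assign ht hF hprog (Finset.nodup_toList _) v
  ⟨fun k => h.1 k (by simp), fun c hc => h.2 c fun k _ hk => hc ⟨k, hk⟩⟩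

end CounterPrograms

lemma _root_.Finset.sup_eq_csSup_image {ι β : Type} [ConditionallyCompleteLinearOrderBot β]
    (s : Finset ι) (f : ι → β) : s.sup f = sSup (f '' s) := by
  rcases s.eq_empty_or_nonempty with rfl | hs
  · simp
  · rw [← Finset.sup'_eq_csSup_image s hs, Finset.sup'_eq_sup]

section WeightedSubsetConstruction

variable {Q β : Type} [DecidableEq Q]

/-- `0` when `q` does not occur in `S`, matching the convention of `maxReach`. -/
def maxWeight (S : Finset (Q × ℕ)) (q : Q) : ℕ := (S.filter fun x => x.1 = q).sup Prod.snd

lemma le_maxWeight {S : Finset (Q × ℕ)} {q : Q} {k : ℕ} (h : (q, k) ∈ S) : k ≤ maxWeight S q :=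
  Finset.le_sup (f := Prod.snd) (b := (q, k)) (Finset.mem_filter.2 ⟨h, rfl⟩)

lemma maxWeight_mem {S : Finset (Q × ℕ)} {q : Q} (h : q ∈ S.image Prod.fst) :
    (q, maxWeight S q) ∈ S := by
  obtain ⟨k, hk⟩ : ∃ k, (q, k) ∈ S := by simpa using h
  have hne : (S.filter fun x => x.1 = q).Nonempty := ⟨_, Finset.mem_filter.2 ⟨hk, rfl⟩⟩
  obtain ⟨⟨p, m⟩, hm, heq⟩ := Finset.exists_mem_eq_sup _ hne Prod.snd
  obtain ⟨hmS, rfl : p = q⟩ := Finset.mem_filter.1 hm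
  rwa [maxWeight, heq]

lemma maxWeight_image_product (S : Finset (Q × ℕ)) (T : Finset β) (f : Q → β → Q) (w : β → ℕ)
    (q : Q) :
    maxWeight ((S ×ˢ T).image fun x => (f x.1.1 x.2, x.1.2 + w x.2)) q =
      ((S.image Prod.fst ×ˢ T).filter fun pb => f pb.1 pb.2 = q).sup
        fun pb => maxWeight S pb.1 + w pb.2 := by
  apply le_antisymm
  · refine Finset.sup_le fun y hy => ?_
    obtain ⟨hyS, rfl⟩ := Finset.mem_filter.1 hy
    obtain ⟨⟨⟨p, k⟩, b⟩, hpkb, rfl⟩ := Finset.mem_image.1 hyS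
    obtain ⟨hpk, hb⟩ := Finset.mem_product.1 hpkb
    calc k + w b ≤ maxWeight S p + w b := Nat.add_le_add_right (le_maxWeight hpk) _
      _ ≤ _ := Finset.le_sup (f := fun pb => maxWeight S pb.1 + w pb.2) (b := (p, b))
          (by simpa using ⟨⟨k, hpk⟩, hb⟩)
  · refine Finset.sup_le fun ⟨p, b⟩ hpb => ?_
    obtain ⟨hpbT, rfl⟩ := Finset.mem_filter.1 hpb
    obtain ⟨hp, hb⟩ := Finset.mem_product.1 hpbT
    exact le_maxWeight (Finset.mem_image.2 ⟨((p, maxWeight S p), b),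
      Finset.mem_product.2 ⟨maxWeight_mem hp, hb⟩, rfl⟩)

end WeightedSubsetConstruction

lemma MaxAutomaton.readConfig_append {β : Type} (B : MaxAutomaton β) (u : List β) (c : β) :
    B.readConfig (u ++ [c]) = B.stepList (B.readConfig u) c :=
  List.foldl_append ..

section EncodeList

variable {α : Type}

lemma encodeList_append_singleton (l : List α) (a : α) (X : Finset ℕ) :
    encodeList (l ++ [a]) X = encodeList l X ++ [(a, decide (l.length ∈ X))] := by
  simp [encodeList, List.zipIdx_append]

lemma encodeList_insert_length (l : List α) (X : Finset ℕ) :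
    encodeList l (insert l.length X) = encodeList l X := by
  refine List.map_congr_left fun p hp => ?_
  have hp : p.2 ≠ l.length := (by simpa using List.snd_lt_of_mem_zipIdx hp : p.2 < _).ne
  simp [hp]

end EncodeList

section Annotations

open scoped Classical

variable {α : Type} (A : MaxAutomaton (α × Bool))

noncomputable def annotations (l : List α) : Finset (A.Q × ℕ) :=
  (Finset.range l.length).powerset.image fun X => ((A.readConfig (encodeList l X)).1, X.card)

lemma maxReach_eq_maxWeight (q : A.Q) (l : List α) :
    maxReach A q l = maxWeight (annotations A l) q := by
  rw [maxReach, maxWeight, Finset.sup_eq_csSup_image]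
  congr 1
  ext k
  simp [annotations, Finset.subset_iff, and_comm]

lemma annotations_nil : annotations A [] = {(A.init, 0)} := by
  simp [annotations, encodeList, MaxAutomaton.readConfig]

lemma annotations_append_singleton (l : List α) (a : α) :
    annotations A (l ++ [a]) = (annotations A l ×ˢ Finset.univ).image
      fun x => ((A.δ x.1.1 (a, x.2)).1, x.1.2 + x.2.toNat) := by
  set n := l.length
  have hn : ∀ {X : Finset ℕ}, X ⊆ Finset.range n → n ∉ X := fun hX h => by simpa using hX h
  have h_false : ∀ {X}, X ⊆ Finset.range n →
      (A.readConfig (encodeList (l ++ [a]) X)).1 =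
        (A.δ (A.readConfig (encodeList l X)).1 (a, false)).1 :=
    fun hX => by simp [encodeList_append_singleton, MaxAutomaton.readConfig_append, hn hX, n,
      MaxAutomaton.stepList]
  have h_true : ∀ {X}, X ⊆ Finset.range n →
      (A.readConfig (encodeList (l ++ [a]) (insert n X))).1 =
        (A.δ (A.readConfig (encodeList l X)).1 (a, true)).1 :=
    fun hX => by simp [encodeList_append_singleton, MaxAutomaton.readConfig_append,
      encodeList_insert_length, n, MaxAutomaton.stepList]
  ext ⟨q, k⟩
  simp only [annotations, List.length_append, List.length_singleton, Finset.range_add_one,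
    Finset.powerset_insert, Finset.image_union, Finset.mem_union, Finset.mem_image,
    Finset.mem_product, Finset.mem_univ, and_true, Finset.mem_powerset, Prod.exists,
    Bool.exists_bool, Prod.mk.injEq]
  constructor
  · rintro (⟨X, hX, rfl, rfl⟩ | ⟨_, ⟨X, hX, rfl⟩, rfl, rfl⟩)
    · exact ⟨_, _, .inl ⟨⟨X, hX, rfl, rfl⟩, (h_false hX).symm, rfl⟩⟩
    · exact ⟨_, _, .inr ⟨⟨X, hX, rfl, rfl⟩, (h_true hX).symm,
        (Finset.card_insert_of_notMem (hn hX)).symm⟩⟩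
  · rintro ⟨_, _, ⟨⟨X, hX, rfl, rfl⟩, rfl, rfl⟩ | ⟨⟨X, hX, rfl, rfl⟩, rfl, rfl⟩⟩
    · exact .inl ⟨X, hX, h_false hX, rfl⟩
    · exact .inr ⟨_, ⟨X, hX, rfl⟩, h_true hX, Finset.card_insert_of_notMem (hn hX)⟩

end Annotations

/-- Counters of the automaton computing `maxReach`: `main q` holds `max(q, ·)`; `succ q` and
`best q` are scratch counters for `main q + 1` and the next value of `main q`. -/
inductive Register (Q : Type)
  | main (q : Q)
  | succ (q : Q)
  | best (q : Q)
  deriving DecidableEq, Fintype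

namespace Register

variable {Q : Type} [Fintype Q] [DecidableEq Q]

noncomputable def succOps : List (CounterOp (Register Q)) :=
  Finset.univ.toList.flatMap fun p => assignSup (succ p) {main p} ++ [.inc (succ p)]

noncomputable def bestOps (T : Q → Finset (Q × Bool)) : List (CounterOp (Register Q)) :=
  Finset.univ.toList.flatMap fun q =>
    assignSup (best q) ((T q).image fun pb => if pb.2 then succ pb.1 else main pb.1)

noncomputable def copyOps : List (CounterOp (Register Q)) :=
  Finset.univ.toList.flatMap fun q => assignSup (main q) {best q}

noncomputable def maxPlusOps (T : Q → Finset (Q × Bool)) : List (CounterOp (Register Q)) :=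
  succOps ++ bestOps T ++ copyOps

lemma runOps_succOps (v : Register Q → ℕ) :
    (∀ p, runOps succOps v (succ p) = v (main p) + 1) ∧
      ∀ p, runOps succOps v (main p) = v (main p) := by
  obtain ⟨h_succ, h_other⟩ := runOps_univ_flatMap_of_assign (fun _ _ => succ.inj)
    (prog := fun p => assignSup (succ p) {main p} ++ [.inc (succ p)])
    (F := fun p v => v (main p) + 1) (fun _ _ _ h => congrArg (· + 1) (h _ (by simp)))
    (fun p v => by
      rw [runOps_append, runOps_assignSup (by simp)]
      simp [applyOp]) v
  exact ⟨h_succ, fun p => h_other _ (by simp)⟩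

lemma runOps_bestOps (T : Q → Finset (Q × Bool)) (v : Register Q → ℕ) (q : Q) :
    runOps (bestOps T) v (best q) =
      (T q).sup fun pb => v (if pb.2 then succ pb.1 else main pb.1) := by
  have hsrc : ∀ pb : Q × Bool, (if pb.2 then succ pb.1 else main pb.1) ∉ Set.range best :=
    fun pb => by split <;> simp
  refine ((runOps_univ_flatMap_of_assign (fun _ _ => best.inj)
    (F := fun q v => (T q).sup fun pb => v (if pb.2 then succ pb.1 else main pb.1))
    (fun q v v' h => Finset.sup_congr rfl fun pb _ => h _ (hsrc pb)) (fun q v => ?_) v).1 q)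
  rw [runOps_assignSup, Finset.sup_image]
  · rfl
  · simp

lemma runOps_copyOps (v : Register Q → ℕ) (q : Q) : runOps copyOps v (main q) = v (best q) :=
  (runOps_univ_flatMap_of_assign (fun _ _ => main.inj) (F := fun q v => v (best q))
    (fun _ _ _ h => h _ (by simp)) (fun q v => by simp [runOps_assignSup]) v).1 q

lemma runOps_maxPlusOps (T : Q → Finset (Q × Bool)) (v : Register Q → ℕ) (q : Q) :
    runOps (maxPlusOps T) v (main q) = (T q).sup fun pb => v (main pb.1) + pb.2.toNat := by
  obtain ⟨h_succ, h_main⟩ := runOps_succOps v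
  rw [maxPlusOps, runOps_append, runOps_append, runOps_copyOps, runOps_bestOps]
  refine Finset.sup_congr rfl fun ⟨p, b⟩ _ => ?_
  cases b <;> simp [h_succ, h_main]

end Register

section MaxReachAutomaton

open scoped Classical

variable {α : Type} (A : MaxAutomaton (α × Bool))

noncomputable def nextStates (R : Finset A.Q) (a : α) : Finset A.Q :=
  (R ×ˢ Finset.univ).image fun pb => (A.δ pb.1 (a, pb.2)).1

noncomputable def transitionsInto (R : Finset A.Q) (a : α) (q : A.Q) : Finset (A.Q × Bool) :=
  (R ×ˢ Finset.univ).filter fun pb => (A.δ pb.1 (a, pb.2)).1 = q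

noncomputable abbrev maxReachAutomaton : MaxAutomaton α where
  Q := Finset A.Q
  C := Register A.Q
  init := {A.init}
  δ R a := (nextStates A R a, Register.maxPlusOps (transitionsInto A R a))
  acc := .tt

lemma readConfig_maxReachAutomaton (l : List α) :
    ((maxReachAutomaton A).readConfig l).1 = (annotations A l).image Prod.fst ∧
      ∀ q, ((maxReachAutomaton A).readConfig l).2 (.main q) = maxWeight (annotations A l) q := by
  induction l using List.reverseRecOn with
  | nil =>
    refine ⟨by simp [annotations_nil]; rfl, fun q => ?_⟩
    simp only [annotations_nil, maxWeight, Finset.filter_singleton]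
    split_ifs <;> rfl
  | append_singleton l a ih =>
    obtain ⟨ih_states, ih_counters⟩ := ih
    rw [MaxAutomaton.readConfig_append, annotations_append_singleton]
    refine ⟨?_, fun q => ?_⟩
    · change nextStates A _ a = _
      rw [ih_states, nextStates, Finset.image_image]
      ext q
      simp
    · change runOps (Register.maxPlusOps (transitionsInto A _ a)) _ (.main q) = _
      rw [Register.runOps_maxPlusOps, maxWeight_image_product (f := fun p b => (A.δ p (a, b)).1)
        (w := Bool.toNat), ih_states]
      exact Finset.sup_congr rfl fun pb _ => by rw [ih_counters]

end MaxReachAutomaton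

theorem exists_maxReach_automaton_general {α : Type}
    (A : MaxAutomaton (α × Bool)) :
    ∃ (B : MaxAutomaton α) (ι : A.Q → B.C), Function.Injective ι ∧
      ∀ (l : List α) (q : A.Q),
        (B.readConfig l).2 (ι q) = maxReach A q l :=
  ⟨maxReachAutomaton A, .main, fun _ _ h => Register.main.inj h, fun l q => by
    rw [maxReach_eq_maxWeight]
    exact (readConfig_maxReachAutomaton A l).2 q⟩

/-- There is a deterministic max-automaton with counters
`{c_q}_{q ∈ Q}` computing, after each finite prefix `a₁⋯aₙ`, the values
`max(q, a₁⋯aₙ)`. -/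
theorem exists_maxReach_automaton {α : Type} [Fintype α]
    (A : MaxAutomaton (α × Bool)) :
    ∃ (B : MaxAutomaton α) (ι : A.Q → B.C), Function.Injective ι ∧
      ∀ (l : List α) (q : A.Q),
        (B.readConfig l).2 (ι q) = maxReach A q l :=
  exists_maxReach_automaton_general A

end MaxReg
end

section
/- Let A be a deterministic max-automaton over Σ×{0,1} recognizing L. A word a₁a₂⋯ ∈ Σ^ω belongs to UL if and only if there is a state q of A such that the set of values { max(q, a₁⋯aₙ) : n ∈ ℕ such that the word (a_{n+1}a_{n+2}⋯)[∅] ∈ (Σ×{0,1})^ω is accepted by A when started in state q } is unbounded. -/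
namespace MaxReg

/-! If `X ⊆ [0, n)`, the run of `A` on `w[X]` continues after position `n` exactly like the
run on `(a_{n+1}a_{n+2}⋯)[∅]` started in the state reached at `n`, except that its counters
exceed those of the restarted run by at most the largest counter value at `n`. Increments,
resets and maxima never widen such a gap, so the two runs output bounded sequences on the same
counters, and `w[X] ∈ L` iff that suffix is accepted from that state. Since `A` has finitely
many states, sets `X` witnessing `w ∈ UL` of growing size can be chosen to reach a common
state `q`, and conversely a set realizing `max(q, a₁⋯aₙ)` is a witness of that size. -/

theorem _root_.List.Forall₂.exists_mem_right {β γ : Type*} {R : β → γ → Prop} {l₁ : List β}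
    {l₂ : List γ} (h : List.Forall₂ R l₁ l₂) {a : β} (ha : a ∈ l₁) : ∃ b ∈ l₂, R a b := by
  induction h with
  | nil => simp at ha
  | @cons _ b _ _ hab _ ih =>
    rcases List.mem_cons.1 ha with rfl | ha
    · exact ⟨b, List.mem_cons_self, hab⟩
    · obtain ⟨b', hb', hab'⟩ := ih ha
      exact ⟨b', List.mem_cons_of_mem _ hb', hab'⟩

theorem _root_.List.Forall₂.exists_mem_left {β γ : Type*} {R : β → γ → Prop} {l₁ : List β}
    {l₂ : List γ} (h : List.Forall₂ R l₁ l₂) {b : γ} (hb : b ∈ l₂) : ∃ a ∈ l₁, R a b :=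
  List.Forall₂.exists_mem_right (R := flip R) (List.Forall₂.flip (R := flip R) h) hb

def Lag (K a b : ℕ) : Prop := a ≤ b ∧ b ≤ a + K

def OutputLag {C : Type} (K : ℕ) (p r : C × ℕ) : Prop := p.1 = r.1 ∧ Lag K p.2 r.2

section CounterOps

variable {C : Type} [DecidableEq C] {K : ℕ} {u v : C → ℕ}

theorem applyOp_lag (h : ∀ c, Lag K (u c) (v c)) (op : CounterOp C) :
    (∀ c, Lag K ((applyOp u op).1 c) ((applyOp v op).1 c)) ∧
      Option.Rel (OutputLag K) (applyOp u op).2 (applyOp v op).2 := by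
  cases op with
  | inc c =>
    refine ⟨fun c' => ?_, .none⟩
    rcases eq_or_ne c' c with rfl | hc
    · have hc := h c'
      simp only [applyOp, Function.update_self, Lag] at hc ⊢
      omega
    · simpa [applyOp, hc] using h c'
  | reset c =>
    refine ⟨fun c' => ?_, .none⟩
    rcases eq_or_ne c' c with rfl | hc
    · simp [applyOp, Lag]
    · simpa [applyOp, hc] using h c'
  | output c => exact ⟨h, .some ⟨rfl, h c⟩⟩
  | maxOp c d =>
    refine ⟨fun c' => ?_, .none⟩
    rcases eq_or_ne c' c with rfl | hc
    · have hc := h c'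
      have hd := h d
      simp only [applyOp, Function.update_self, Lag] at hc hd ⊢
      omega
    · simpa [applyOp, hc] using h c'

theorem applyOps_lag (ops : List (CounterOp C)) (h : ∀ c, Lag K (u c) (v c)) :
    (∀ c, Lag K ((applyOps ops u).1 c) ((applyOps ops v).1 c)) ∧
      List.Forall₂ (OutputLag K) (applyOps ops u).2 (applyOps ops v).2 := by
  induction ops generalizing u v with
  | nil => exact ⟨h, .nil⟩
  | cons op ops ih =>
    obtain ⟨hvals, hout⟩ := applyOp_lag h op
    obtain ⟨hvals', hout'⟩ := ih hvals
    refine ⟨hvals', List.rel_append ?_ hout'⟩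
    generalize (applyOp u op).2 = o₁, (applyOp v op).2 = o₂ at hout ⊢
    rcases hout with hpr | _
    · exact .cons hpr .nil
    · exact .nil

end CounterOps

namespace MaxAutomaton

variable {β : Type} (A : MaxAutomaton β) (q : A.Q) (u : ℕ → β) (n : ℕ)

theorem runFrom_add (k : ℕ) :
    A.runFrom q u (n + k) = A.runFrom (A.runFrom q u n) (suffixFrom u n) k := by
  induction k with
  | zero => rfl
  | succ k ih =>
    rw [← Nat.add_assoc, runFrom, runFrom, ih]
    rfl

theorem valsFrom_add_lag {K : ℕ} (hK : ∀ c, A.valsFrom q u n c ≤ K) (k : ℕ) (c : A.C) :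
    Lag K (A.valsFrom (A.runFrom q u n) (suffixFrom u n) k c) (A.valsFrom q u (n + k) c) := by
  induction k generalizing c with
  | zero => exact ⟨Nat.zero_le _, by simpa [valsFrom] using hK c⟩
  | succ k ih =>
    rw [← Nat.add_assoc]
    simp only [valsFrom, runFrom_add]
    exact (applyOps_lag _ ih).1 c

theorem outsFrom_add_lag {K : ℕ} (hK : ∀ c, A.valsFrom q u n c ≤ K) (k : ℕ) :
    List.Forall₂ (OutputLag K)
      (A.outsFrom (A.runFrom q u n) (suffixFrom u n) k) (A.outsFrom q u (n + k)) := by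
  simp only [outsFrom, runFrom_add]
  exact (applyOps_lag _ (A.valsFrom_add_lag q u n hK k)).2

theorem exists_bound_outsFrom :
    ∃ B, ∀ j < n, ∀ p ∈ A.outsFrom q u j, p.2 ≤ B :=
  ⟨((Finset.range n).biUnion fun j => (A.outsFrom q u j).toFinset).sup Prod.snd,
    fun j hj p hp => Finset.le_sup (by simpa using ⟨j, hj, hp⟩)⟩

theorem boundedFrom_iff_suffixFrom (c : A.C) :
    A.BoundedFrom q u c ↔ A.BoundedFrom (A.runFrom q u n) (suffixFrom u n) c := by
  set K := Finset.univ.sup (A.valsFrom q u n)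
  have hK : ∀ c, A.valsFrom q u n c ≤ K := fun c => Finset.le_sup (Finset.mem_univ c)
  constructor
  · rintro ⟨B, hB⟩
    refine ⟨B, fun k p hp hpc => ?_⟩
    obtain ⟨r, hr, hpr, hlag, -⟩ := (A.outsFrom_add_lag q u n hK k).exists_mem_right hp
    exact hlag.trans (hB _ r hr (hpr ▸ hpc))
  · rintro ⟨B, hB⟩
    obtain ⟨B₀, hB₀⟩ := A.exists_bound_outsFrom q u n
    refine ⟨max B₀ (B + K), fun j r hr hrc => ?_⟩
    rcases lt_or_ge j n with hj | hj
    · exact (hB₀ j hj r hr).trans (le_max_left _ _)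
    · obtain ⟨k, rfl⟩ := Nat.exists_eq_add_of_le hj
      obtain ⟨p, hp, hpr, -, hlag⟩ := (A.outsFrom_add_lag q u n hK k).exists_mem_left hr
      have hpB := hB k p hp (hpr ▸ hrc)
      exact le_max_of_le_right (by omega)

theorem acceptsFrom_iff_suffixFrom :
    A.AcceptsFrom q u ↔ A.AcceptsFrom (A.runFrom q u n) (suffixFrom u n) := by
  unfold AcceptsFrom
  rw [funext fun c => propext (A.boundedFrom_iff_suffixFrom q u n c)]

theorem readConfig_map_range :
    A.readConfig ((List.range n).map u) = (A.runFrom A.init u n, A.valsFrom A.init u n) := by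
  induction n with
  | zero => rfl
  | succ n ih =>
    simp only [readConfig, List.range_succ, List.map_append, List.foldl_append] at ih ⊢
    rw [ih]
    rfl

end MaxAutomaton

section Annotations

variable {α : Type} (w : ℕ → α)

@[simp]
theorem length_prefixList (n : ℕ) : (prefixList w n).length = n := by
  simp [prefixList]

theorem encodeList_prefixList (X : Finset ℕ) (n : ℕ) :
    encodeList (prefixList w n) X = (List.range n).map (withSet w X) := by
  induction n with
  | zero => rfl
  | succ n ih =>
    have hsnoc : prefixList w (n + 1) = prefixList w n ++ [w n] := by
      simp [prefixList, List.range_succ]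
    rw [hsnoc, List.range_succ, List.map_append, ← ih]
    simp [encodeList, List.zipIdx_append, withSet]

theorem suffixFrom_withSet {X : Finset ℕ} {n : ℕ} (hX : ∀ x ∈ X, x < n) :
    suffixFrom (withSet w X) n = withSet (suffixFrom w n) ∅ := by
  funext k
  have hk : n + k ∉ X := fun h => Nat.not_lt.2 (Nat.le_add_right n k) (hX _ h)
  simp [withSet, suffixFrom, hk]

variable (A : MaxAutomaton (α × Bool))

theorem readConfig_encodeList_prefixList (X : Finset ℕ) (n : ℕ) :
    (A.readConfig (encodeList (prefixList w n) X)).1 = A.runFrom A.init (withSet w X) n := by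
  rw [encodeList_prefixList, A.readConfig_map_range]

theorem accepts_withSet_iff {X : Finset ℕ} {n : ℕ} (hX : ∀ x ∈ X, x < n) :
    A.Accepts (withSet w X) ↔
      A.AcceptsFrom (A.runFrom A.init (withSet w X) n) (withSet (suffixFrom w n) ∅) := by
  rw [← suffixFrom_withSet w hX]
  exact A.acceptsFrom_iff_suffixFrom _ _ n

end Annotations

section MaxReach

variable {α : Type} (A : MaxAutomaton (α × Bool)) (q : A.Q) (l : List α)

theorem bddAbove_maxReach_set : BddAbove { k | ∃ X : Finset ℕ, (∀ x ∈ X, x < l.length) ∧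
    X.card = k ∧ (A.readConfig (encodeList l X)).1 = q } := by
  refine ⟨l.length, ?_⟩
  rintro _ ⟨X, hX, rfl, -⟩
  simpa using Finset.card_le_card fun x hx => Finset.mem_range.2 (hX x hx)

theorem card_le_maxReach {X : Finset ℕ} (hX : ∀ x ∈ X, x < l.length)
    (hq : (A.readConfig (encodeList l X)).1 = q) : X.card ≤ maxReach A q l :=
  le_csSup (bddAbove_maxReach_set A q l) ⟨X, hX, rfl, hq⟩

theorem exists_card_eq_maxReach (h : 0 < maxReach A q l) :
    ∃ X : Finset ℕ, (∀ x ∈ X, x < l.length) ∧ X.card = maxReach A q l ∧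
      (A.readConfig (encodeList l X)).1 = q := by
  refine Nat.sSup_mem ?_ (bddAbove_maxReach_set A q l)
  by_contra hempty
  rw [Set.not_nonempty_iff_eq_empty] at hempty
  simp [maxReach, hempty] at h

end MaxReach

theorem mem_UL_iff_maxReach_unbounded_general {α : Type}
    (A : MaxAutomaton (α × Bool)) (w : ℕ → α) :
    w ∈ UL A.Lang ↔
      ∃ q : A.Q, ∀ m : ℕ, ∃ n : ℕ,
        A.AcceptsFrom q (withSet (suffixFrom w n) (∅ : Finset ℕ)) ∧
        m ≤ maxReach A q (prefixList w n) := by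
  constructor
  · intro hw
    choose X hcard hacc using hw
    choose N hN using fun m => (X m).exists_nat_subset_range
    have hlt : ∀ m, ∀ x ∈ X m, x < N m := fun m x hx => Finset.mem_range.1 (hN m hx)
    obtain ⟨q, hq⟩ :=
      Finite.exists_infinite_fiber fun m => A.runFrom A.init (withSet w (X m)) (N m)
    refine ⟨q, fun m => ?_⟩
    obtain ⟨m', hqm' : A.runFrom A.init (withSet w (X m')) (N m') = q, hmm'⟩ :=
      (Set.infinite_coe_iff.1 hq).exists_gt m
    refine ⟨N m', hqm' ▸ (accepts_withSet_iff w A (hlt m')).1 (hacc m'), ?_⟩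
    calc m ≤ m' := hmm'.le
      _ ≤ (X m').card := hcard m'
      _ ≤ maxReach A q (prefixList w (N m')) :=
        card_le_maxReach A q _ (by simpa using hlt m')
          (by rw [readConfig_encodeList_prefixList, hqm'])
  · rintro ⟨q, hq⟩ m
    obtain ⟨n, hacc, hm⟩ := hq (m + 1)
    obtain ⟨X, hX, hcard, hqX⟩ := exists_card_eq_maxReach A q (prefixList w n) (by omega)
    rw [length_prefixList] at hX
    rw [readConfig_encodeList_prefixList] at hqX
    exact ⟨X, by omega, (accepts_withSet_iff w A hX).2 (hqX ▸ hacc)⟩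

/-- A word `a₁a₂⋯` belongs to `UL` iff for some state `q` the
values `max(q, a₁⋯aₙ)`, over those `n` for which the suffix
`(a_{n+1}a_{n+2}⋯)[∅]` is accepted by `A` started in `q`, are unbounded. -/
theorem mem_UL_iff_maxReach_unbounded {α : Type} [Fintype α]
    (A : MaxAutomaton (α × Bool)) (w : ℕ → α) :
    w ∈ UL A.Lang ↔
      ∃ q : A.Q, ∀ m : ℕ, ∃ n : ℕ,
        A.AcceptsFrom q (withSet (suffixFrom w n) (∅ : Finset ℕ)) ∧
        m ≤ maxReach A q (prefixList w n) :=
  mem_UL_iff_maxReach_unbounded_general A w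

end MaxReg
end
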